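/- Let K be an algebraically closed field of characteristic zero, θ_x ∈ {σ_x, τ_{q,x}} acting on K(x,y), and let p ∈ K(x)[y] be an irreducible monic polynomial in y over K(x). Then for any nonzero integer m, either gcd(p, θ_x^m(p)) = 1 in K(x)[y], or p ∈ K[y]. -/

import Mathlib

/-!
If `p` is not coprime to `θ^m p`, irreducibility gives `p ∣ θ^m p`, and as both are monic and
irreducible, `p = θ^m p`. So every coefficient of `p` is fixed by `ψ = θ^m`, which is the
substitution `x ↦ s(x)` with `s = x + m` or `s = q^m x`.
For `f = a / b` in lowest terms with `b` monic and `ψ f = f`, coprimality of `a` and `b` forces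
`a ∘ s = λ a` and `b ∘ s = λ b`. For the shift, leading coefficients give `λ = 1`, and a polynomial
invariant under `x ↦ x + c` is constant on the infinitely many points `n c` (characteristic zero).
For the `q`-shift, comparing coefficients gives `u ^ j = λ` on the supports of `a` and `b`, so both
are multiples of one power `x ^ d`, and coprimality forces `d = 0`.
-/

open Polynomial

namespace Polynomial

variable {K : Type*} [Field K]

theorem comp_ne_zero_of_natDegree_eq_one {g s : K[X]} (hg : g ≠ 0) (hs : s.natDegree = 1) :
    g.comp s ≠ 0 := by
  rw [Ne, comp_eq_zero_iff, not_or]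
  refine ⟨hg, fun ⟨_, h⟩ => ?_⟩
  rw [h, natDegree_C] at hs
  exact zero_ne_one hs

theorem natDegree_eq_zero_of_comp_X_add_C_eq_self [CharZero K] {c : K} (hc : c ≠ 0) {g : K[X]}
    (hg : g.comp (X + C c) = g) : g.natDegree = 0 := by
  have heval : ∀ n : ℕ, g.eval (n * c) = g.eval 0 := by
    intro n
    induction n with
    | zero => simp
    | succ n ih => rw [← ih, ← congrArg (eval (n * c)) hg, eval_comp]; simp [add_mul]
  have hinj : Function.Injective fun n : ℕ => (n : K) * c := fun i j h =>
    by exact_mod_cast mul_right_cancel₀ hc h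
  have hconst : g - C (g.eval 0) = 0 := by
    refine eq_zero_of_infinite_isRoot _ (Set.infinite_of_injective_forall_mem hinj fun n => ?_)
    simp [heval]
  rw [sub_eq_zero.mp hconst, natDegree_C]

theorem pow_eq_of_comp_C_mul_X_eq_C_mul_self {u c : K} {g : K[X]}
    (hg : g.comp (C u * X) = C c * g) {j : ℕ} (hj : g.coeff j ≠ 0) : u ^ j = c := by
  have := congrArg (coeff · j) hg
  simp only [comp_C_mul_X_coeff, coeff_C_mul] at this
  exact mul_left_cancel₀ hj (by linear_combination this)

theorem map_eq_self_of_dvd_map {F : Type*} [Field F] (σ : F ≃+* F) {p : F[X]}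
    (hirr : Irreducible p) (hmon : p.Monic) (hdvd : p ∣ p.map (σ : F →+* F)) :
    p.map (σ : F →+* F) = p :=
  (eq_of_monic_of_associated hmon (hmon.map _)
    (hirr.associated_of_dvd (hirr.map (mapEquiv σ)) hdvd)).symm

end Polynomial

namespace RatFunc

variable {K : Type*} [Field K]

theorem algEquiv_apply_C (ψ : RatFunc K ≃ₐ[K] RatFunc K) (c : K) : ψ (C c) = C c := by
  rw [← algebraMap_eq_C]
  exact ψ.commutes c

theorem zpow_apply_X_of_apply_X_eq_X_add_one (θ : RatFunc K ≃ₐ[K] RatFunc K)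
    (hθ : θ X = X + 1) (n : ℤ) : (θ ^ n) X = X + C (n : K) := by
  induction n using Int.induction_on with
  | zero => simp
  | succ n ih =>
    rw [zpow_add_one, AlgEquiv.mul_apply, hθ, map_add, map_one, ih]
    push_cast
    rw [map_add, map_one]
    ring
  | pred n ih =>
    apply θ.injective
    rw [← AlgEquiv.mul_apply, ← zpow_one_add, show 1 + (-(n : ℤ) - 1) = -n by ring, ih, map_add,
      hθ, algEquiv_apply_C]
    push_cast
    rw [map_sub, map_one]
    ring

theorem zpow_apply_X_of_apply_X_eq_C_mul_X (θ : RatFunc K ≃ₐ[K] RatFunc K) {q : K} (hq : q ≠ 0)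
    (hθ : θ X = C q * X) (n : ℤ) : (θ ^ n) X = C (q ^ n) * X := by
  induction n using Int.induction_on with
  | zero => simp
  | succ n ih =>
    rw [zpow_add_one, AlgEquiv.mul_apply, hθ, map_mul, algEquiv_apply_C, ih, zpow_add_one₀ hq,
      map_mul]
    ring
  | pred n ih =>
    apply θ.injective
    rw [← AlgEquiv.mul_apply, ← zpow_one_add, show 1 + (-(n : ℤ) - 1) = -n by ring, ih, map_mul,
      hθ, algEquiv_apply_C, ← mul_assoc, ← map_mul, ← zpow_add_one₀ hq, sub_add_cancel]

theorem algEquiv_algebraMap_eq_comp (ψ : RatFunc K ≃ₐ[K] RatFunc K) {s : K[X]}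
    (hs : ψ X = algebraMap K[X] (RatFunc K) s) (a : K[X]) :
    ψ (algebraMap K[X] (RatFunc K) a) = algebraMap K[X] (RatFunc K) (a.comp s) := by
  have key : (ψ.toAlgHom.comp (IsScalarTower.toAlgHom K K[X] (RatFunc K)))
      = (IsScalarTower.toAlgHom K K[X] (RatFunc K)).comp (aeval s) :=
    algHom_ext (by simpa [algebraMap_X] using hs)
  simpa [aeval_def, comp] using congr($key a)

theorem exists_comp_num_denom_eq_C_mul_of_fixed (ψ : RatFunc K ≃ₐ[K] RatFunc K) {s : K[X]}
    (hs : ψ X = algebraMap K[X] (RatFunc K) s) (hs1 : s.natDegree = 1) {f : RatFunc K}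
    (hf : ψ f = f) :
    ∃ c : K, f.num.comp s = Polynomial.C c * f.num ∧ f.denom.comp s = Polynomial.C c * f.denom := by
  have hb : f.denom.comp s ≠ 0 := comp_ne_zero_of_natDegree_eq_one f.denom_ne_zero hs1
  have hcross : f.num.comp s * f.denom = f.num * f.denom.comp s := by
    rw [← f.num_div_denom, map_div₀, algEquiv_algebraMap_eq_comp ψ hs,
      algEquiv_algebraMap_eq_comp ψ hs, div_eq_div_iff (algebraMap_ne_zero hb)
        (algebraMap_ne_zero f.denom_ne_zero), ← map_mul, ← map_mul] at hf
    exact algebraMap_injective K hf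
  have hdvd : f.denom ∣ f.denom.comp s :=
    f.isCoprime_num_denom.symm.dvd_of_dvd_mul_left ⟨_, hcross.symm.trans (mul_comm _ _)⟩
  obtain ⟨c, hdenom⟩ : ∃ c, f.denom.comp s = Polynomial.C c * f.denom :=
    ⟨_, eq_leadingCoeff_mul_of_monic_of_dvd_of_natDegree_le f.monic_denom hdvd
      (by rw [natDegree_comp, hs1, mul_one])⟩
  refine ⟨c, mul_right_cancel₀ f.denom_ne_zero ?_, hdenom⟩
  rw [hcross, hdenom]
  ring

theorem mem_range_algebraMap_of_natDegree_eq_zero {f : RatFunc K} (hnum : f.num.natDegree = 0)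
    (hdenom : f.denom.natDegree = 0) : f ∈ Set.range (algebraMap K (RatFunc K)) := by
  obtain ⟨a, ha⟩ : ∃ a, f.num = Polynomial.C a := ⟨_, eq_C_of_natDegree_eq_zero hnum⟩
  obtain ⟨b, hb⟩ : ∃ b, f.denom = Polynomial.C b := ⟨_, eq_C_of_natDegree_eq_zero hdenom⟩
  refine ⟨a / b, ?_⟩
  rw [map_div₀, ← f.num_div_denom, ha, hb, algebraMap_C, algebraMap_C, algebraMap_eq_C]

theorem mem_range_algebraMap_of_fixed_of_apply_X_eq_X_add_C [CharZero K]
    (ψ : RatFunc K ≃ₐ[K] RatFunc K) {c : K} (hc : c ≠ 0) (hs : ψ X = X + C c) {f : RatFunc K}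
    (hf : ψ f = f) : f ∈ Set.range (algebraMap K (RatFunc K)) := by
  have hs' : ψ X = algebraMap K[X] (RatFunc K) (Polynomial.X + Polynomial.C c) := by
    rw [hs, map_add, algebraMap_X, algebraMap_C]
  obtain ⟨l, hnum, hdenom⟩ :=
    exists_comp_num_denom_eq_C_mul_of_fixed ψ hs' (natDegree_X_add_C c) hf
  have hl : l = 1 := by
    have := (f.monic_denom.comp_X_add_C c).leadingCoeff
    rwa [hdenom, leadingCoeff_mul, leadingCoeff_C, f.monic_denom.leadingCoeff, mul_one] at this
  rw [hl, Polynomial.C_1, one_mul] at hnum hdenom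
  exact mem_range_algebraMap_of_natDegree_eq_zero
    (natDegree_eq_zero_of_comp_X_add_C_eq_self hc hnum)
    (natDegree_eq_zero_of_comp_X_add_C_eq_self hc hdenom)

theorem mem_range_algebraMap_of_fixed_of_apply_X_eq_C_mul_X (ψ : RatFunc K ≃ₐ[K] RatFunc K)
    {u : K} (hu : Function.Injective (u ^ · : ℕ → K)) (hs : ψ X = C u * X) {f : RatFunc K}
    (hf : ψ f = f) : f ∈ Set.range (algebraMap K (RatFunc K)) := by
  have hu0 : u ≠ 0 := fun h => by simpa [h] using hu.ne (by decide : (1 : ℕ) ≠ 2)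
  have hs' : ψ X = algebraMap K[X] (RatFunc K) (Polynomial.C u * Polynomial.X) := by
    rw [hs, map_mul, algebraMap_X, algebraMap_C]
  obtain ⟨l, hnum, hdenom⟩ :=
    exists_comp_num_denom_eq_C_mul_of_fixed ψ hs' (natDegree_C_mul_X u hu0) hf
  have hexp : ∀ {g : K[X]}, g.comp (Polynomial.C u * Polynomial.X) = Polynomial.C l * g →
      ∀ {j}, g.coeff j ≠ 0 → j = f.denom.natDegree := fun hg _ hj =>
    hu <| (pow_eq_of_comp_C_mul_X_eq_C_mul_self hg hj).trans
      (pow_eq_of_comp_C_mul_X_eq_C_mul_self hdenom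
        (j := f.denom.natDegree) (by rw [f.monic_denom.coeff_natDegree]; exact one_ne_zero)).symm
  have hd : f.denom.natDegree = 0 := by
    by_contra hd
    refine not_isUnit_X (f.isCoprime_num_denom.isUnit_of_dvd' ?_ ?_) <;>
      rw [X_dvd_iff] <;> by_contra h0
    · exact hd (hexp hnum h0).symm
    · exact hd (hexp hdenom h0).symm
  refine mem_range_algebraMap_of_natDegree_eq_zero ?_ hd
  rcases eq_or_ne f.num 0 with h | h
  · rw [h, natDegree_zero]
  · exact (hexp hnum (mt leadingCoeff_eq_zero.mp h)).trans hd

theorem mem_range_algebraMap_of_zpow_apply_eq_self [CharZero K] {q : K}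
    (hq : ∀ k : ℤ, k ≠ 0 → q ^ k ≠ 1) (θ : RatFunc K ≃ₐ[K] RatFunc K)
    (hθ : θ X = X + 1 ∨ θ X = C q * X) {m : ℤ} (hm : m ≠ 0) {f : RatFunc K}
    (hf : (θ ^ m) f = f) : f ∈ Set.range (algebraMap K (RatFunc K)) := by
  rcases hθ with hθ | hθ
  · exact mem_range_algebraMap_of_fixed_of_apply_X_eq_X_add_C _ (Int.cast_ne_zero.mpr hm)
      (zpow_apply_X_of_apply_X_eq_X_add_one θ hθ m) hf
  · have hq0 : q ≠ 0 := by
      rintro rfl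
      exact X_ne_zero (θ.injective (by rw [hθ, map_zero, zero_mul, map_zero]))
    refine mem_range_algebraMap_of_fixed_of_apply_X_eq_C_mul_X _ (fun i j hij => ?_)
      (zpow_apply_X_of_apply_X_eq_C_mul_X θ hq0 hθ m) hf
    by_contra hij'
    refine hq (m * i - m * j) ?_ ?_
    · rw [← mul_sub]
      exact mul_ne_zero hm (sub_ne_zero.mpr (by exact_mod_cast hij'))
    · simp only at hij
      rw [zpow_sub₀ hq0, zpow_mul, zpow_mul, zpow_natCast, zpow_natCast, hij,
        div_self (pow_ne_zero _ (zpow_ne_zero _ hq0))]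

end RatFunc

theorem coprime_or_constant_coeffs_general (K : Type) [Field K] [CharZero K]
    (q : K) (hq : ∀ k : ℤ, k ≠ 0 → q ^ k ≠ 1)
    (θ : RatFunc K ≃ₐ[K] RatFunc K)
    (hθ : θ RatFunc.X = RatFunc.X + 1 ∨ θ RatFunc.X = RatFunc.C q * RatFunc.X)
    (p : Polynomial (RatFunc K)) (hirr : Irreducible p) (hmon : p.Monic)
    (m : ℤ) (hm : m ≠ 0) :
    IsCoprime p (p.map ((θ ^ m).toAlgHom.toRingHom)) ∨
      ∃ p₀ : Polynomial K, p = p₀.map (algebraMap K (RatFunc K)) := by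
  rcases EuclideanDomain.dvd_or_coprime p (p.map (θ ^ m).toAlgHom.toRingHom) hirr with hdvd | hcop
  · have hfix := map_eq_self_of_dvd_map (θ ^ m).toRingEquiv hirr hmon hdvd
    have hcoeff (n : ℕ) : (θ ^ m) (p.coeff n) = p.coeff n := by
      simpa using congrArg (coeff · n) hfix
    obtain ⟨p₀, hp₀⟩ := (mem_lifts p).mp <| (lifts_iff_coeff_lifts p).mpr fun n =>
      RatFunc.mem_range_algebraMap_of_zpow_apply_eq_self hq θ hθ hm (hcoeff n)
    exact Or.inr ⟨p₀, hp₀.symm⟩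
  · exact Or.inl hcop

/-- If `p ∈ K(x)[y]` is irreducible and monic, then for any nonzero integer `m`, either
`gcd(p, θ_x^m(p)) = 1` in `K(x)[y]`, or `p ∈ K[y]`; here `θ_x ∈ {σ_x, τ_{q,x}}` acts on
`K(x)[y]` through the coefficients. -/
theorem coprime_or_constant_coeffs (K : Type) [Field K] [CharZero K] [IsAlgClosed K]
    (q : K) (hq : ∀ k : ℤ, k ≠ 0 → q ^ k ≠ 1)
    (θ : RatFunc K ≃ₐ[K] RatFunc K)
    (hθ : θ RatFunc.X = RatFunc.X + 1 ∨ θ RatFunc.X = RatFunc.C q * RatFunc.X)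
    (p : Polynomial (RatFunc K)) (hirr : Irreducible p) (hmon : p.Monic)
    (m : ℤ) (hm : m ≠ 0) :
    IsCoprime p (p.map ((θ ^ m).toAlgHom.toRingHom)) ∨
      ∃ p₀ : Polynomial K, p = p₀.map (algebraMap K (RatFunc K)) :=
  coprime_or_constant_coeffs_general K q hq θ hθ p hirr hmon m hm
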